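/- arXiv:2302.10867 — 2 statements merged into one kernel-verified Lean document; each statement's English description precedes it below -/
import Mathlib

section
/- Let t₀ ∈ k^× and suppose α ∈ k satisfies α² = t₀. Then there is a k-algebra isomorphism A_{t₀} ≅ A, obtained by sending x ↦ α on the fixed point algebra A^θ ⊕ A^{-θ}x ⊆ A[x]/(x²−t₀). -/
open LaurentPolynomial

/-- `A_t`: the `k[t^{±1}]`-subalgebra of `A[√t^{±1}]` generated by `A^θ` and
`(1/√t)·A^{-θ}`, i.e. `A^θ[t^{±1}] ⊕ (1/√t)A^{-θ} ⊗ k[t^{±1}]`. -/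
noncomputable def contractionT (k A : Type*) [CommRing k] [CommRing A] [Algebra k A]
    (θ : A →ₐ[k] A) : Subalgebra k (LaurentPolynomial A) :=
  Algebra.adjoin k (insert (T 2) (insert (T (-2))
    ({f | ∃ a, θ a = a ∧ f = C a} ∪ {f | ∃ a, θ a = -a ∧ f = C a * T (-1)})))

theorem tSubT0_mem_contractionT {k A : Type*} [CommRing k] [CommRing A] [Algebra k A]
    (θ : A →ₐ[k] A) (t₀ : k) :
    (T 2 - C (algebraMap k A t₀) : LaurentPolynomial A) ∈ contractionT k A θ :=
  sub_mem (Algebra.subset_adjoin (Set.mem_insert _ _))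
    (show algebraMap k (LaurentPolynomial A) t₀ ∈ _ from
      Subalgebra.algebraMap_mem _ t₀)

/-- The fiber `A_{t₀} = A_t/(t - t₀)` of the contraction algebra at a unit `t₀`. -/
noncomputable abbrev contractionFiber (k A : Type*) [CommRing k] [CommRing A] [Algebra k A]
    (θ : A →ₐ[k] A) (t₀ : k) :=
  ↥(contractionT k A θ) ⧸
    (Ideal.span {(⟨T 2 - C (algebraMap k A t₀), tSubT0_mem_contractionT θ t₀⟩ :
      ↥(contractionT k A θ))})

/-!
Writing `T` for `√t`, evaluation at `√t = α` maps `A_t` to `A` and kills `t - t₀ = T² - α²`.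
Since `1/2 ∈ k`, every `a ∈ A` splits as `a₊ + a₋` into `θ`-even and `θ`-odd parts, and
`a ↦ a₊ + α a₋ / √t` is inverse to it. This map is multiplicative modulo `t - t₀` because
`(α / √t)² = t₀ / t ≡ 1`, and composed with evaluation it is the identity on `A` (as
`a₊ + a₋ = a`) and on each generator of `A_t`.
-/

section InvolutionParts

variable {k A : Type*} [CommRing k] [CommRing A] [Algebra k A] [Invertible (2 : k)]
  (θ : A →ₐ[k] A)

noncomputable def evenPart : A →ₗ[k] A := ⅟(2 : k) • (LinearMap.id + θ.toLinearMap)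

noncomputable def oddPart : A →ₗ[k] A := ⅟(2 : k) • (LinearMap.id - θ.toLinearMap)

variable {θ}

lemma evenPart_apply (a : A) : evenPart θ a = ⅟(2 : k) • (a + θ a) := rfl

lemma oddPart_apply (a : A) : oddPart θ a = ⅟(2 : k) • (a - θ a) := rfl

lemma evenPart_add_oddPart (a : A) : evenPart θ a + oddPart θ a = a := by
  have h : a + θ a + (a - θ a) = (2 : k) • a := by rw [two_smul]; abel
  rw [evenPart_apply, oddPart_apply, ← smul_add, h, invOf_smul_smul]

lemma evenPart_of_map_eq_self {a : A} (h : θ a = a) : evenPart θ a = a := by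
  rw [evenPart_apply, h, ← two_smul k, invOf_smul_smul]

lemma oddPart_of_map_eq_self {a : A} (h : θ a = a) : oddPart θ a = 0 := by
  rw [oddPart_apply, h, sub_self, smul_zero]

lemma evenPart_of_map_eq_neg {a : A} (h : θ a = -a) : evenPart θ a = 0 := by
  rw [evenPart_apply, h, add_neg_cancel, smul_zero]

lemma oddPart_of_map_eq_neg {a : A} (h : θ a = -a) : oddPart θ a = a := by
  rw [oddPart_apply, h, sub_neg_eq_add, ← two_smul k, invOf_smul_smul]

lemma map_evenPart (hθ : Function.Involutive θ) (a : A) : θ (evenPart θ a) = evenPart θ a := by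
  rw [evenPart_apply, map_smul, map_add, hθ, add_comm]

lemma map_oddPart (hθ : Function.Involutive θ) (a : A) : θ (oddPart θ a) = -oddPart θ a := by
  rw [oddPart_apply, map_smul, map_sub, hθ, ← smul_neg, neg_sub]

lemma algebraMap_invOf_two_mul_two : algebraMap k A (⅟(2 : k)) * 2 = 1 := by
  rw [← map_ofNat (algebraMap k A) 2, ← map_mul, invOf_mul_self, map_one]

lemma evenPart_mul (a b : A) :
    evenPart θ (a * b) = evenPart θ a * evenPart θ b + oddPart θ a * oddPart θ b := by
  have h2 := algebraMap_invOf_two_mul_two (k := k) (A := A)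
  simp only [evenPart_apply, oddPart_apply, Algebra.smul_def, map_mul]
  linear_combination (-(algebraMap k A (⅟(2 : k)) * (a * b + θ a * θ b))) * h2

lemma oddPart_mul (a b : A) :
    oddPart θ (a * b) = evenPart θ a * oddPart θ b + oddPart θ a * evenPart θ b := by
  have h2 := algebraMap_invOf_two_mul_two (k := k) (A := A)
  simp only [evenPart_apply, oddPart_apply, Algebra.smul_def, map_mul]
  linear_combination (-(algebraMap k A (⅟(2 : k)) * (a * b - θ a * θ b))) * h2

end InvolutionParts

namespace LaurentPolynomial

variable (k : Type*) {A : Type*} [CommRing k] [CommRing A] [Algebra k A]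

noncomputable def aeval (x : Aˣ) : A[T;T⁻¹] →ₐ[k] A :=
  { eval₂ (RingHom.id A) x with
    commutes' := fun r => by simp [algebraMap_apply, eval₂_C] }

variable {k}

@[simp]
lemma aeval_C (x : Aˣ) (a : A) : aeval k x (C a) = a := eval₂_C _ _ a

@[simp]
lemma aeval_T (x : Aˣ) (n : ℤ) : aeval k x (T n) = ↑(x ^ n) := eval₂_T _ _ n

lemma aeval_units_map_T (α : kˣ) (n : ℤ) :
    aeval k (Units.map (algebraMap k A : k →* A) α) (T n) = algebraMap k A ↑(α ^ n) := by
  rw [aeval_T, ← map_zpow, Units.coe_map]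
  rfl

end LaurentPolynomial

section ContractionFiber

variable {k A : Type*} [CommRing k] [CommRing A] [Algebra k A] {θ : A →ₐ[k] A}

lemma T_two_mem_contractionT : (T 2 : A[T;T⁻¹]) ∈ contractionT k A θ :=
  Algebra.subset_adjoin (by simp)

lemma T_neg_two_mem_contractionT : (T (-2) : A[T;T⁻¹]) ∈ contractionT k A θ :=
  Algebra.subset_adjoin (by simp)

lemma C_mem_contractionT {a : A} (h : θ a = a) : C a ∈ contractionT k A θ :=
  Algebra.subset_adjoin <| Set.mem_insert_of_mem _ <| Set.mem_insert_of_mem _ <|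
    Or.inl ⟨a, h, rfl⟩

lemma C_mul_T_neg_one_mem_contractionT {b : A} (h : θ b = -b) :
    C b * T (-1) ∈ contractionT k A θ :=
  Algebra.subset_adjoin <| Set.mem_insert_of_mem _ <| Set.mem_insert_of_mem _ <|
    Or.inr ⟨b, h, rfl⟩

lemma contractionT_algHom_ext {B : Type*} [Semiring B] [Algebra k B]
    {f g : contractionT k A θ →ₐ[k] B}
    (hT₂ : f ⟨T 2, T_two_mem_contractionT⟩ = g ⟨T 2, T_two_mem_contractionT⟩)
    (hTneg₂ : f ⟨T (-2), T_neg_two_mem_contractionT⟩ = g ⟨T (-2), T_neg_two_mem_contractionT⟩)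
    (hC : ∀ a (h : θ a = a), f ⟨C a, C_mem_contractionT h⟩ = g ⟨C a, C_mem_contractionT h⟩)
    (hCT : ∀ b (h : θ b = -b), f ⟨C b * T (-1), C_mul_T_neg_one_mem_contractionT h⟩ =
      g ⟨C b * T (-1), C_mul_T_neg_one_mem_contractionT h⟩) :
    f = g :=
  AlgHom.ext_of_eq_adjoin rfl fun x hx => by
    rcases hx with rfl | rfl | ⟨a, ha, rfl⟩ | ⟨b, hb, rfl⟩
    exacts [hT₂, hTneg₂, hC a ha, hCT b hb]

variable (θ) in
noncomputable abbrev fiberMk (t₀ : k) : contractionT k A θ →ₐ[k] contractionFiber k A θ t₀ :=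
  Ideal.Quotient.mkₐ k _

lemma fiberMk_eq_of_sub_eq_mul {t₀ : k} {x y c : contractionT k A θ}
    (h : (x : A[T;T⁻¹]) - (y : A[T;T⁻¹]) = (c : A[T;T⁻¹]) * (T 2 - C (algebraMap k A t₀))) :
    fiberMk θ t₀ x = fiberMk θ t₀ y :=
  Ideal.Quotient.eq.mpr (Ideal.mem_span_singleton.mpr ⟨c, Subtype.ext (h.trans (mul_comm _ _))⟩)

lemma fiberMk_T_two (t₀ : k) :
    fiberMk θ t₀ ⟨T 2, T_two_mem_contractionT⟩ = algebraMap k _ t₀ := by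
  rw [← (fiberMk θ t₀).commutes]
  exact fiberMk_eq_of_sub_eq_mul (c := 1) (by simp [LaurentPolynomial.algebraMap_apply])

lemma fiberMk_T_neg_two (u : kˣ) :
    fiberMk θ u ⟨T (-2), T_neg_two_mem_contractionT⟩ = algebraMap k _ ↑u⁻¹ := by
  have h : (⟨T (-2), T_neg_two_mem_contractionT⟩ * ⟨T 2, T_two_mem_contractionT⟩ :
      contractionT k A θ) = 1 :=
    Subtype.ext <| show T (-2) * T 2 = 1 by rw [← T_add, neg_add_cancel, T_zero]
  calc fiberMk θ u ⟨T (-2), T_neg_two_mem_contractionT⟩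
      = fiberMk θ u (⟨T (-2), T_neg_two_mem_contractionT⟩ * ⟨T 2, T_two_mem_contractionT⟩)
          * algebraMap k _ ↑u⁻¹ := by
        rw [map_mul, fiberMk_T_two, mul_assoc, ← map_mul, Units.mul_inv, map_one, mul_one]
    _ = algebraMap k _ ↑u⁻¹ := by rw [h, map_one, one_mul]

end ContractionFiber

section FiberEval

variable {k A : Type*} [CommRing k] [CommRing A] [Algebra k A] {u α : kˣ}

lemma aeval_T_neg_one :
    aeval k (Units.map (algebraMap k A : k →* A) α) (T (-1)) = algebraMap k A ↑α⁻¹ := by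
  rw [aeval_units_map_T, zpow_neg_one]

lemma aeval_T_two (hα : α * α = u) :
    aeval k (Units.map (algebraMap k A : k →* A) α) (T 2) = algebraMap k A u := by
  rw [aeval_units_map_T, zpow_two, hα]

lemma aeval_T_neg_two (hα : α * α = u) :
    aeval k (Units.map (algebraMap k A : k →* A) α) (T (-2)) = algebraMap k A ↑u⁻¹ := by
  rw [aeval_units_map_T, zpow_neg, zpow_two, hα]

noncomputable def fiberEval (θ : A →ₐ[k] A) (hα : α * α = u) :
    contractionFiber k A θ u →ₐ[k] A :=
  Ideal.Quotient.liftₐ _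
    ((aeval k (Units.map (algebraMap k A : k →* A) α)).comp (contractionT k A θ).val) <| by
      intro g hg
      obtain ⟨c, rfl⟩ := Ideal.mem_span_singleton'.mp hg
      simp [aeval_T_two hα]

lemma fiberEval_fiberMk {θ : A →ₐ[k] A} (hα : α * α = u) (g : contractionT k A θ) :
    fiberEval θ hα (fiberMk θ u g) = aeval k (Units.map (algebraMap k A : k →* A) α) g := rfl

end FiberEval

section FiberSection

variable {k A : Type*} [CommRing k] [CommRing A] [Algebra k A] [Invertible (2 : k)]
  {θ : A →ₐ[k] A}

variable (θ) in
noncomputable def sqrtLift (α : k) (a : A) : A[T;T⁻¹] :=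
  C (evenPart θ a) + α • (C (oddPart θ a) * T (-1))

lemma sqrtLift_mem (hθ : Function.Involutive θ) (α : k) (a : A) :
    sqrtLift θ α a ∈ contractionT k A θ :=
  add_mem (C_mem_contractionT (map_evenPart hθ a))
    (Subalgebra.smul_mem _ (C_mul_T_neg_one_mem_contractionT (map_oddPart hθ a)) α)

lemma sqrtLift_of_map_eq_self (α : k) {a : A} (h : θ a = a) : sqrtLift θ α a = C a := by
  rw [sqrtLift, evenPart_of_map_eq_self h, oddPart_of_map_eq_self h, map_zero, zero_mul, smul_zero, add_zero]

lemma sqrtLift_of_map_eq_neg (α : k) {b : A} (h : θ b = -b) :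
    sqrtLift θ α b = α • (C b * T (-1)) := by
  rw [sqrtLift, evenPart_of_map_eq_neg h, oddPart_of_map_eq_neg h, map_zero, zero_add]

lemma sqrtLift_add (α : k) (a b : A) :
    sqrtLift θ α (a + b) = sqrtLift θ α a + sqrtLift θ α b := by
  simp only [sqrtLift, map_add, add_mul, smul_add]
  abel

lemma sqrtLift_mul_sub_mul (α : k) (a b : A) :
    sqrtLift θ α (a * b) - sqrtLift θ α a * sqrtLift θ α b
      = C (oddPart θ a * oddPart θ b) * T (-2) * (T 2 - C (algebraMap k A (α * α))) := by
  have hT₁ : (T (-1) : A[T;T⁻¹]) * T (-1) = T (-2) := by rw [← T_add]; norm_num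
  have hT₂ : (T (-2) : A[T;T⁻¹]) * T 2 = 1 := by rw [← T_add, neg_add_cancel, T_zero]
  set x := C (oddPart θ a) * C (oddPart θ b)
  set β : A[T;T⁻¹] := C (algebraMap k A α)
  simp only [sqrtLift, evenPart_mul, oddPart_mul, map_add, map_mul, Algebra.smul_def,
    LaurentPolynomial.algebraMap_apply]
  linear_combination (-x * β * β) * hT₁ - x * hT₂

variable (hθ : Function.Involutive θ) {u α : kˣ} (hα : α * α = u)

noncomputable def fiberSection : A →ₐ[k] contractionFiber k A θ u where
  toFun a := fiberMk θ u ⟨sqrtLift θ α a, sqrtLift_mem hθ α a⟩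
  map_one' := by
    rw [← map_one (fiberMk θ u)]
    exact congrArg _ (Subtype.ext (sqrtLift_of_map_eq_self _ (map_one θ)))
  map_mul' a b := by
    rw [← map_mul]
    have hfix : θ (oddPart θ a * oddPart θ b) = oddPart θ a * oddPart θ b := by
      rw [map_mul, map_oddPart hθ, map_oddPart hθ, neg_mul_neg]
    have hmem := mul_mem (C_mem_contractionT hfix) T_neg_two_mem_contractionT
    refine fiberMk_eq_of_sub_eq_mul (c := ⟨_, hmem⟩) ?_
    rw [Subalgebra.coe_mul, sqrtLift_mul_sub_mul, ← Units.val_mul, hα]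
  map_zero' := by
    rw [← map_zero (fiberMk θ u)]
    exact congrArg _ (Subtype.ext ((sqrtLift_of_map_eq_self _ (map_zero θ)).trans (map_zero C)))
  map_add' a b := by
    rw [← map_add]
    exact congrArg _ (Subtype.ext (sqrtLift_add _ a b))
  commutes' r := by
    rw [← (fiberMk θ u).commutes]
    exact congrArg _ (Subtype.ext (sqrtLift_of_map_eq_self _ (θ.commutes r)))

lemma fiberSection_of_map_eq_self {a : A} (h : θ a = a) :
    fiberSection hθ hα a = fiberMk θ u ⟨C a, C_mem_contractionT h⟩ :=
  congrArg _ (Subtype.ext (sqrtLift_of_map_eq_self _ h))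

lemma fiberSection_of_map_eq_neg {b : A} (h : θ b = -b) :
    fiberSection hθ hα (algebraMap k A ↑α⁻¹ * b) =
      fiberMk θ u ⟨C b * T (-1), C_mul_T_neg_one_mem_contractionT h⟩ := by
  have h' : θ (algebraMap k A ↑α⁻¹ * b) = -(algebraMap k A ↑α⁻¹ * b) := by
    rw [map_mul, θ.commutes, h, mul_neg]
  refine congrArg _ (Subtype.ext ?_)
  change sqrtLift θ α _ = C b * T (-1)
  rw [sqrtLift_of_map_eq_neg _ h', Algebra.smul_def, LaurentPolynomial.algebraMap_apply, ← mul_assoc,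
    ← map_mul, ← mul_assoc, ← map_mul, Units.mul_inv, map_one, one_mul]

lemma fiberEval_comp_fiberSection :
    (fiberEval θ hα).comp (fiberSection hθ hα) = AlgHom.id k A := by
  ext a
  change aeval k _ (sqrtLift θ α a) = a
  rw [sqrtLift, map_add, map_smul, map_mul, aeval_C, aeval_C, aeval_T_neg_one, Algebra.smul_def,
    mul_left_comm, ← map_mul, Units.mul_inv, map_one, mul_one, evenPart_add_oddPart]

lemma fiberSection_comp_fiberEval :
    (fiberSection hθ hα).comp (fiberEval θ hα) = AlgHom.id k (contractionFiber k A θ u) := by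
  refine Ideal.Quotient.algHom_ext k (contractionT_algHom_ext ?_ ?_ (fun a ha => ?_)
    (fun b hb => ?_)) <;> simp only [AlgHom.comp_apply, AlgHom.id_apply, fiberEval_fiberMk]
  · rw [aeval_T_two hα, AlgHom.commutes, fiberMk_T_two]
  · rw [aeval_T_neg_two hα, AlgHom.commutes, fiberMk_T_neg_two]
  · rw [aeval_C, fiberSection_of_map_eq_self _ _ ha]
  · rw [map_mul, aeval_C, aeval_T_neg_one, mul_comm, fiberSection_of_map_eq_neg _ _ hb]

noncomputable def contractionFiberEquiv : contractionFiber k A θ u ≃ₐ[k] A :=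
  AlgEquiv.ofAlgHom (fiberEval θ hα) (fiberSection hθ hα)
    (fiberEval_comp_fiberSection hθ hα) (fiberSection_comp_fiberEval hθ hα)

end FiberSection

theorem contractionFiber_iso_of_sqrt
    (k A : Type*) [CommRing k] [CommRing A] [Algebra k A] [Invertible (2 : k)]
    (θ : A →ₐ[k] A) (hθ : θ.comp θ = AlgHom.id k A)
    (u : kˣ) (α : k) (hα : α * α = (u : k)) :
    ∃ e : contractionFiber k A θ (u : k) ≃ₐ[k] A,
      (∀ (g : ↥(contractionT k A θ)) (a : A),
        (g : LaurentPolynomial A) = C a → e (Ideal.Quotient.mk _ g) = a) ∧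
      (∀ (g : ↥(contractionT k A θ)) (b : A),
        (g : LaurentPolynomial A) = C b * T (-1) →
          e (Ideal.Quotient.mk _ g) = algebraMap k A ((↑u⁻¹ : k) * α) * b) := by
  have hinv : α * ((↑u⁻¹ : k) * α) = 1 := by rw [mul_left_comm, hα, Units.inv_mul]
  set β : kˣ := Units.mkOfMulEqOne α _ hinv
  have hβ : β * β = u := Units.ext hα
  have hβinv : ((β⁻¹ : kˣ) : k) = (↑u⁻¹ : k) * α := rfl
  refine ⟨contractionFiberEquiv (fun a => DFunLike.congr_fun hθ a) hβ, fun g a hg => ?_,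
    fun g b hg => ?_⟩
  · change aeval k _ (g : A[T;T⁻¹]) = a
    rw [hg, aeval_C]
  · change aeval k _ (g : A[T;T⁻¹]) = _
    rw [hg, map_mul, aeval_C, aeval_T_neg_one, hβinv, mul_comm]
end

section
/- There is a canonical isomorphism of k[√t]-algebras 𝐀 ⊗_{k[t]} k[√t] ≅ A[√t] ⊕ ⊕_{n≥1} I^n·(√t)^{-n}, i.e., the base change of the contraction algebra along k[t] → k[√t] (t ↦ (√t)²) is the extended Rees algebra of (A, I), where I is the ideal generated by A^{-θ}. -/
/-!
Every generator of `𝐀` sits in a single degree `n` with coefficient in the `(-1)ⁿ`-eigenspace of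
`θ` (and in `I⁻ⁿ` when `n < 0`); both conditions are multiplicative, so they hold for all
coefficients of elements of `𝐀`. Conversely, for `x ∈ Iʳ` and `s ∈ {r, r + 1}`, the
`(-1)ˢ`-component of `x` placed in degree `-s` lies in `𝐀`: for `θ a = -a` the `(-1)ˢ`-component
of `a * y` is `a` times the `(-1)ˢ⁻¹`-component of `y`, and `C a * T (-1)` is a generator.
Splitting each coefficient of `f` in degree `n` into its `(-1)ⁿ`- and `(-1)ⁿ⁻¹`-components,
placed in degrees `n` and `n - 1`, writes `f = g + √t * h` with `g, h ∈ 𝐀`. As `2` is invertible,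
the two eigenspaces meet only in `0`, so the decomposition is unique.
-/

open LaurentPolynomial

/-- The contraction algebra `𝐀`: the `k[t]`-subalgebra of `A[√t^{±1}]`
(with `t = (√t)²`) generated by `A^θ` and `(1/√t)·A^{-θ}`. -/
noncomputable def contraction (k A : Type*) [CommRing k] [CommRing A] [Algebra k A]
    (θ : A →ₐ[k] A) : Subalgebra k (LaurentPolynomial A) :=
  Algebra.adjoin k (insert (T 2)
    ({f | ∃ a, θ a = a ∧ f = C a} ∪ {f | ∃ a, θ a = -a ∧ f = C a * T (-1)}))

lemma map_units_zsmul {F M N : Type*} [AddGroup M] [AddGroup N] [FunLike F M N]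
    [AddMonoidHomClass F M N] (f : F) (u : ℤˣ) (x : M) : f (u • x) = u • f x := by
  rw [Units.smul_def, Units.smul_def, map_zsmul]

section

variable {k A : Type*} [CommRing k] [CommRing A] [Algebra k A] {θ : A →ₐ[k] A}

variable (θ) in
def antiInvariantIdeal : Ideal A := Ideal.span {x | θ x = -x}

lemma map_mem_antiInvariantIdeal_pow (hθ : Function.Involutive θ) {r : ℕ} {x : A}
    (hx : x ∈ antiInvariantIdeal θ ^ r) : θ x ∈ antiInvariantIdeal θ ^ r := by
  have hI : antiInvariantIdeal θ ≤ (antiInvariantIdeal θ).comap θ :=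
    Ideal.span_le.2 fun a ha => Ideal.subset_span (show θ (θ a) = -θ a by rw [hθ a, ha, neg_neg])
  exact Ideal.le_comap_pow θ r (Ideal.pow_right_mono hI r hx)

lemma T_two_mem_contraction : T 2 ∈ contraction k A θ :=
  Algebra.subset_adjoin (Set.mem_insert _ _)

lemma C_mem_contraction {a : A} (ha : θ a = a) : C a ∈ contraction k A θ :=
  Algebra.subset_adjoin (Or.inr (Or.inl ⟨a, ha, rfl⟩))

lemma C_mul_T_neg_one_mem_contraction {a : A} (ha : θ a = -a) :
    C a * T (-1) ∈ contraction k A θ :=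
  Algebra.subset_adjoin (Or.inr (Or.inr ⟨a, ha, rfl⟩))

variable (θ) in
def contractionCoeffs (n : ℤ) : AddSubmonoid A where
  carrier := {x | θ x = n.negOnePow • x ∧ x ∈ antiInvariantIdeal θ ^ (-n).toNat}
  zero_mem' := ⟨by rw [map_zero, smul_zero], zero_mem _⟩
  add_mem' hx hy := ⟨by rw [map_add, hx.1, hy.1, smul_add], add_mem hx.2 hy.2⟩

lemma mul_mem_contractionCoeffs {m n : ℤ} {x y : A} (hx : x ∈ contractionCoeffs θ m)
    (hy : y ∈ contractionCoeffs θ n) : x * y ∈ contractionCoeffs θ (m + n) := by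
  refine ⟨by rw [map_mul, hx.1, hy.1, smul_mul_smul_comm, Int.negOnePow_add], ?_⟩
  have hxy := Ideal.mul_mem_mul hx.2 hy.2
  rw [← pow_add] at hxy
  exact Ideal.pow_le_pow_right (by omega) hxy

lemma coeff_C_mul_T_mem_contractionCoeffs {n : ℤ} {x : A} (hx : x ∈ contractionCoeffs θ n)
    (m : ℤ) : (C x * T n).coeff m ∈ contractionCoeffs θ m := by
  rw [← single_eq_C_mul_T, AddMonoidAlgebra.coeff_single, Finsupp.single_apply]
  split_ifs with h
  · exact h ▸ hx
  · exact zero_mem _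

lemma coeff_mem_contractionCoeffs {f : LaurentPolynomial A} (hf : f ∈ contraction k A θ)
    (n : ℤ) : f.coeff n ∈ contractionCoeffs θ n := by
  have coeff_C_mem {a : A} (ha : θ a = a) (m : ℤ) : (C a).coeff m ∈ contractionCoeffs θ m := by
    simpa using coeff_C_mul_T_mem_contractionCoeffs (n := 0) ⟨by simpa using ha, by simp⟩ m
  induction hf using Algebra.adjoin_induction generalizing n with
  | mem f hf =>
    rcases hf with rfl | ⟨a, ha, rfl⟩ | ⟨a, ha, rfl⟩
    · simpa using coeff_C_mul_T_mem_contractionCoeffs (x := (1 : A)) (n := 2)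
        ⟨by rw [map_one, Int.negOnePow_even 2 even_two, one_smul], by simp⟩ n
    · exact coeff_C_mem ha n
    · refine coeff_C_mul_T_mem_contractionCoeffs ⟨?_, ?_⟩ n
      · rw [ha, Int.negOnePow_neg, Int.negOnePow_one, Units.neg_smul, one_smul]
      · rw [neg_neg, Int.toNat_one, pow_one]
        exact Ideal.subset_span ha
  | algebraMap c => exact coeff_C_mem (θ.commutes c) n
  | add f g _ _ hf hg => exact add_mem (hf n) (hg n)
  | mul f g _ _ hf hg =>
    classical
    rw [AddMonoidAlgebra.coeff_mul]
    refine sum_mem fun i _ => sum_mem fun j _ => ?_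
    dsimp only
    split_ifs with h
    · exact h ▸ mul_mem_contractionCoeffs (hf i) (hg j)
    · exact zero_mem _

lemma coeff_add_T_one_mul (g h : LaurentPolynomial A) (n : ℤ) :
    (g + T 1 * h).coeff n = g.coeff n + h.coeff (n - 1) := by
  rw [AddMonoidAlgebra.coeff_add, Finsupp.add_apply, T, AddMonoidAlgebra.coeff_single_mul_apply,
    one_mul, neg_add_eq_sub]

lemma coeff_add_T_one_mul_mem_pow {g h : LaurentPolynomial A} (hg : g ∈ contraction k A θ)
    (hh : h ∈ contraction k A θ) (n : ℤ) :
    (g + T 1 * h).coeff n ∈ antiInvariantIdeal θ ^ (-n).toNat := by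
  rw [coeff_add_T_one_mul]
  exact add_mem (coeff_mem_contractionCoeffs hg n).2 <|
    Ideal.pow_le_pow_right (by omega) (coeff_mem_contractionCoeffs hh (n - 1)).2

variable [Invertible (2 : k)]

variable (θ) in
noncomputable def signProj (n : ℤ) : A →+ A :=
  AddMonoidHom.mk' (fun x => ⅟(2 : k) • (x + n.negOnePow • θ x)) fun x y => by
    simp only [map_add, smul_add]; abel

lemma signProj_apply (n : ℤ) (x : A) :
    signProj θ n x = ⅟(2 : k) • (x + n.negOnePow • θ x) := rfl

lemma signProj_congr {m n : ℤ} (h : m.negOnePow = n.negOnePow) : signProj θ m = signProj θ n := by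
  ext x
  rw [signProj_apply, signProj_apply, h]

lemma map_signProj (hθ : Function.Involutive θ) (n : ℤ) (x : A) :
    θ (signProj θ n x) = n.negOnePow • signProj θ n x := by
  rw [signProj_apply, map_smul, map_add, map_units_zsmul, hθ x, smul_comm n.negOnePow,
    smul_add n.negOnePow, smul_smul n.negOnePow, Int.units_mul_self, one_smul, add_comm]

lemma signProj_of_map_eq {n : ℤ} {x : A} (hx : θ x = n.negOnePow • x) :
    signProj θ n x = x := by
  rw [signProj_apply, hx, smul_smul, Int.units_mul_self, one_smul, ← two_smul k, smul_smul,
    invOf_mul_self, one_smul]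

lemma signProj_add_signProj_sub_one (n : ℤ) (x : A) :
    signProj θ n x + signProj θ (n - 1) x = x := by
  rw [signProj_apply, signProj_apply, Int.negOnePow_sub, Int.negOnePow_one, mul_neg_one,
    ← smul_add, Units.neg_smul, add_add_add_comm, add_neg_cancel, add_zero, ← two_smul k,
    smul_smul, invOf_mul_self, one_smul]

lemma signProj_add_one_mul {a : A} (ha : θ a = -a) (n : ℤ) (y : A) :
    signProj θ (n + 1) (a * y) = a * signProj θ n y := by
  rw [signProj_apply, signProj_apply, mul_smul_comm, mul_add, mul_smul_comm, map_mul, ha,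
    Int.negOnePow_succ, Units.neg_smul, neg_mul, smul_neg, neg_neg]

lemma eq_zero_of_map_eq_of_map_eq_neg {n : ℤ} {x : A} (h₁ : θ x = n.negOnePow • x)
    (h₂ : θ x = -(n.negOnePow • x)) : x = 0 := by
  rw [← signProj_of_map_eq h₁, signProj_apply, h₂, smul_neg, smul_smul, Int.units_mul_self,
    one_smul, add_neg_cancel, smul_zero]

lemma C_signProj_mul_T_neg_mem_contraction (hθ : Function.Involutive θ) :
    ∀ (r : ℕ) {x : A}, x ∈ antiInvariantIdeal θ ^ r → ∀ s : ℕ, r ≤ s → s ≤ r + 1 →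
      C (signProj θ s x) * T (-s) ∈ contraction k A θ
  | 0, x, _, s, _, hs => by
    interval_cases s
    · simpa using C_mem_contraction (by simpa using map_signProj hθ 0 x)
    · simpa using C_mul_T_neg_one_mem_contraction (by simpa using map_signProj hθ 1 x)
  | r + 1, _, _, 0, hrs, _ => absurd hrs (by omega)
  | r + 1, x, hx, s + 1, hrs, hs => by
    rw [pow_succ'] at hx
    refine Submodule.mul_induction_on hx (fun a ha y hy => ?_) fun x y hx hy => ?_
    · induction ha using Submodule.span_induction generalizing y with
      | mem a ha =>
        have h : C (signProj θ ↑(s + 1) (a * y)) * T (-↑(s + 1)) =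
            (C a * T (-1)) * (C (signProj θ s y) * T (-s)) := by
          rw [Nat.cast_succ, signProj_add_one_mul ha, map_mul, neg_add, T_add]; ring
        rw [h]
        exact mul_mem (C_mul_T_neg_one_mem_contraction ha)
          (C_signProj_mul_T_neg_mem_contraction hθ r hy s (by omega) (by omega))
      | zero => simp
      | add a b _ _ ha hb =>
        rw [add_mul, map_add, map_add, add_mul]
        exact add_mem (ha y hy) (hb y hy)
      | smul c a _ ha =>
        rw [smul_eq_mul, mul_assoc, mul_left_comm]
        exact ha _ (Ideal.mul_mem_left _ c hy)
    · rw [map_add, map_add, add_mul]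
      exact add_mem hx hy

lemma C_signProj_mul_T_mem_contraction (hθ : Function.Involutive θ) {r : ℕ} {x : A}
    (hx : x ∈ antiInvariantIdeal θ ^ r) {n : ℤ} (hn : -(r + 1 : ℤ) ≤ n) :
    C (signProj θ n x) * T n ∈ contraction k A θ := by
  obtain ⟨s, m, hs, rfl⟩ : ∃ s m : ℕ, s ≤ r + 1 ∧ n = -s + 2 * m :=
    ⟨if n ≤ 0 then (-n).toNat else n.toNat % 2, if n ≤ 0 then 0 else (n.toNat + 1) / 2,
      by split_ifs <;> omega, by split_ifs <;> omega⟩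
  have hsign : (-(s : ℤ) + 2 * m).negOnePow = (s : ℤ).negOnePow := by
    rw [Int.negOnePow_add, Int.negOnePow_neg, Int.negOnePow_two_mul, mul_one]
  rw [signProj_congr hsign, T_add, ← mul_assoc, mul_comm 2, ← T_pow]
  refine mul_mem ?_ (pow_mem T_two_mem_contraction m)
  rcases le_total r s with hrs | hsr
  · exact C_signProj_mul_T_neg_mem_contraction hθ r hx s hrs hs
  · exact C_signProj_mul_T_neg_mem_contraction hθ s (Ideal.pow_le_pow_right hsr hx) s le_rfl
      (by omega)

lemma exists_eq_add_T_one_mul (hθ : Function.Involutive θ) {f : LaurentPolynomial A}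
    (hf : ∀ n : ℤ, n < 0 → f.coeff n ∈ antiInvariantIdeal θ ^ (-n).toNat) :
    ∃ g ∈ contraction k A θ, ∃ h ∈ contraction k A θ, f = g + T 1 * h := by
  let S := Subalgebra.toSubmodule (contraction k A θ)
  suffices f ∈ S ⊔ S.map (LinearMap.mulLeft k (T 1)) by
    obtain ⟨g, hg, _, ⟨h, hh, rfl⟩, hf⟩ := Submodule.mem_sup.1 this
    exact ⟨g, hg, h, hh, hf.symm⟩
  have hf' (n : ℤ) : f.coeff n ∈ antiInvariantIdeal θ ^ (-n).toNat := by
    rcases lt_or_ge n 0 with hn | hn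
    · exact hf n hn
    · simp [Int.toNat_eq_zero.2 (neg_nonpos.2 hn)]
  have hsplit (n : ℤ) (x : A) : AddMonoidAlgebra.single n x =
      C (signProj θ n x) * T n + T 1 * (C (signProj θ (n - 1) x) * T (n - 1)) := by
    rw [← single_eq_C_mul_T, ← single_eq_C_mul_T, T, AddMonoidAlgebra.single_mul_single,
      one_mul, add_sub_cancel, ← AddMonoidAlgebra.single_add, signProj_add_signProj_sub_one]
  rw [← AddMonoidAlgebra.sum_coeff_single f]
  refine sum_mem fun n _ => Submodule.mem_sup.2 ⟨_, ?_, _, ⟨_, ?_, rfl⟩, (hsplit n _).symm⟩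
  · exact C_signProj_mul_T_mem_contraction hθ (hf' n) (by omega)
  · exact C_signProj_mul_T_mem_contraction hθ (hf' n) (by omega)

lemma eq_of_add_T_one_mul_eq {g h g' h' : LaurentPolynomial A} (hg : g ∈ contraction k A θ)
    (hh : h ∈ contraction k A θ) (hg' : g' ∈ contraction k A θ) (hh' : h' ∈ contraction k A θ)
    (H : g + T 1 * h = g' + T 1 * h') : g = g' ∧ h = h' := by
  have hg_eq : g = g' := by
    ext n
    have hn := congrArg (·.coeff n) H
    simp only [coeff_add_T_one_mul] at hn
    have h₁ := (coeff_mem_contractionCoeffs (sub_mem hg hg') n).1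
    have h₂ := (coeff_mem_contractionCoeffs (sub_mem hh' hh) (n - 1)).1
    rw [AddMonoidAlgebra.coeff_sub, Finsupp.sub_apply] at h₁ h₂
    rw [show h'.coeff (n - 1) - h.coeff (n - 1) = g.coeff n - g'.coeff n by
      linear_combination -hn, Int.negOnePow_sub, Int.negOnePow_one, mul_neg_one,
      Units.neg_smul] at h₂
    exact sub_eq_zero.1 (eq_zero_of_map_eq_of_map_eq_neg h₁ h₂)
  subst hg_eq
  exact ⟨rfl, (isUnit_T 1).mul_left_cancel (add_left_cancel H)⟩

end

/-- `k[√t]` is free over `k[t]` on `{1, √t}`, so `𝐀 ⊗_{k[t]} k[√t]` is modelled by the pairs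
`(g, h) ∈ 𝐀 × 𝐀` via `(g, h) ↦ g + √t * h`. -/
theorem contraction_baseChange_sqrt_eq_extendedRees
    (k A : Type*) [CommRing k] [CommRing A] [Algebra k A] [Invertible (2 : k)]
    (θ : A →ₐ[k] A) (hθ : θ.comp θ = AlgHom.id k A) :
    ∀ f : LaurentPolynomial A,
      (∀ n : ℤ, n < 0 → AddMonoidAlgebra.coeff f n ∈ (Ideal.span {x : A | θ x = -x}) ^ (-n).toNat) ↔
      ∃! p : ↥(contraction k A θ) × ↥(contraction k A θ),
        f = (p.1 : LaurentPolynomial A) + T 1 * (p.2 : LaurentPolynomial A) := by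
  have hθ' : Function.Involutive θ := fun x => AlgHom.congr_fun hθ x
  intro f
  constructor
  · intro hf
    obtain ⟨g, hg, h, hh, rfl⟩ := exists_eq_add_T_one_mul hθ' hf
    refine ⟨(⟨g, hg⟩, ⟨h, hh⟩), rfl, fun p hp => ?_⟩
    obtain ⟨h₁, h₂⟩ := eq_of_add_T_one_mul_eq p.1.2 p.2.2 hg hh hp.symm
    exact Prod.ext (Subtype.ext h₁) (Subtype.ext h₂)
  · rintro ⟨p, rfl, -⟩ n -
    exact coeff_add_T_one_mul_mem_pow p.1.2 p.2.2 n
end
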